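/- The space C_k(ω × M, 2), where ω × M is the topological sum of countably many copies of the countable metric fan M, is homeomorphic to the countable power C_k(M,2)^ω with the product topology, and is not sequential. -/

import Mathlib

open Filter Topology

/-- The countable metric fan `M = (ω × ω) ∪ {∞}`; `none` plays the role of `∞`. -/
def Fan : Type := Option (ℕ × ℕ)

/-- The basic neighborhood `U(n) = {∞} ∪ ((ω \ n) × ω)` of `∞`. -/
def fanU (n : ℕ) : Set Fan := {x | x = none ∨ ∃ p : ℕ × ℕ, x = some p ∧ n ≤ p.1}

/-- The fan topology: points of `ω × ω` are isolated and the sets `U(n)` are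
basic neighborhoods of `∞`. -/
instance : TopologicalSpace Fan :=
  TopologicalSpace.generateFrom
    ({V | ∃ p : ℕ × ℕ, V = {some p}} ∪ {V | ∃ n : ℕ, V = fanU n})

/-!
A compact subset of a topological sum meets only finitely many summands, so restriction to the
summands is a homeomorphism `C_k(Σ i, X i, Y) ≃ₜ ∏ i, C_k(X i, Y)`.

For non-sequentiality, let `x^{k,n} ∈ C_k(M, 2)^ω` have the indicator of the isolated point
`(k, n)` in its coordinates `i ≤ k`, the indicator of `(n, 0)` in coordinate `k + 1`, and `0`
elsewhere. A compact subset of `M` meets each column `{k} × ω` in a finite set, so `0` lies in the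
closure of `A = {x^{k,n}}`, but not in `A`. Yet `A` is sequentially closed: indicators of points
`q_j` with first coordinate tending to `∞` cannot converge to some `g`, since `q_j → ∞` in `M`,
and compact-open convergence would force both `1_{q_j}(q_j) = 1` and `1_{q_j}(∞) = 0` to tend to
`g(∞)`. So along a convergent sequence in `A` first `k`, then `n`, is constant on a subsequence.
-/

open Set

namespace ContinuousMap

def sigmaHomeomorph {ι Y : Type*} {X : ι → Type*} [∀ i, TopologicalSpace (X i)]
    [TopologicalSpace Y] : C((Σ i, X i), Y) ≃ₜ ∀ i, C(X i, Y) where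
  toEquiv := (sigmaEquiv Y X).symm
  continuous_toFun := continuous_pi fun i => continuous_precomp (sigmaMk i)
  continuous_invFun := by
    refine continuous_compactOpen.2 fun K hK U hU => ?_
    obtain ⟨s, t, hs, ht, rfl⟩ := hK.sigma_exists_finite_sigma_eq
    have hpre : {f | MapsTo (sigmaEquiv Y X f) (s.sigma t) U} =
        ⋂ i ∈ s, (fun f => f i) ⁻¹' {g : C(X i, Y) | MapsTo g (t i) U} := by
      ext f
      simp only [MapsTo, Sigma.forall, mem_ofPred_eq, mem_iInter, mem_preimage, mem_sigma_iff]
      exact ⟨fun h i hi x hx => h i x ⟨hi, hx⟩, fun h i x hx => h i hx.1 hx.2⟩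
    change IsOpen {f | MapsTo (sigmaEquiv Y X f) (s.sigma t) U}
    rw [hpre]
    exact hs.isOpen_biInter fun i _ =>
      (isOpen_setOfPred_mapsTo (ht i) hU).preimage (continuous_apply i)

theorem tendsto_apply_of_tendsto {X Y : Type*} [TopologicalSpace X] [TopologicalSpace Y]
    {f : ℕ → C(X, Y)} {g : C(X, Y)} {x : ℕ → X} {a : X}
    (hf : Tendsto f atTop (𝓝 g)) (hx : Tendsto x atTop (𝓝 a)) :
    Tendsto (fun j => f j (x j)) atTop (𝓝 (g a)) := by
  refine (nhds_basis_opens (g a)).tendsto_right_iff.2 fun V ⟨haV, hV⟩ => ?_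
  obtain ⟨N, hN⟩ := eventually_atTop.1 (hx.eventually (g.continuous.tendsto a (hV.mem_nhds haV)))
  have hK : IsCompact (insert a (range fun j => x (j + N))) :=
    (hx.comp (tendsto_add_atTop_nat N)).isCompact_insert_range
  have hgK : MapsTo g (insert a (range fun j => x (j + N))) V := by
    rintro _ (rfl | ⟨j, rfl⟩)
    exacts [haV, hN _ (Nat.le_add_left N j)]
  filter_upwards [hf.eventually (eventually_mapsTo hK hV hgK), eventually_ge_atTop N] with j hj hjN
  exact hj (Or.inr ⟨j - N, by simp only [Nat.sub_add_cancel hjN]⟩)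

end ContinuousMap

theorem Nat.exists_frequently_eq_or_tendsto_atTop (g : ℕ → ℕ) :
    (∃ c, ∃ᶠ j in atTop, g j = c) ∨ Tendsto g atTop atTop := by
  refine or_iff_not_imp_left.2 fun h => tendsto_atTop.2 fun b => ?_
  push Not at h
  filter_upwards [(eventually_all_finite (finite_Iio b)).2 fun c _ => h c] with j hj
  exact not_lt.1 fun hlt => hj _ hlt rfl

namespace Fan

def pt (p : ℕ × ℕ) : Fan := some p

def infty : Fan := none

theorem pt_injective : Function.Injective pt := Option.some_injective _

theorem pt_ne_infty (p : ℕ × ℕ) : pt p ≠ infty := Option.some_ne_none p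

theorem pt_mem_fanU {n : ℕ} {p : ℕ × ℕ} : pt p ∈ fanU n ↔ n ≤ p.1 := by
  refine ⟨?_, fun h => Or.inr ⟨p, rfl, h⟩⟩
  rintro (h | ⟨q, hq, h⟩)
  · exact absurd h (pt_ne_infty p)
  · rwa [pt_injective hq]

theorem fanU_antitone : Antitone fanU := by
  rintro m n hmn x (hx | ⟨p, rfl, hp⟩)
  exacts [Or.inl hx, Or.inr ⟨p, rfl, hmn.trans hp⟩]

theorem isOpen_singleton_pt (p : ℕ × ℕ) : IsOpen ({pt p} : Set Fan) :=
  TopologicalSpace.isOpen_generateFrom_of_mem (Or.inl ⟨p, rfl⟩)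

theorem hasBasis_nhds_infty : (𝓝 infty).HasBasis (fun _ => True) fanU := by
  have hnhds : 𝓝 infty = ⨅ n, 𝓟 (fanU n) := by
    refine TopologicalSpace.nhds_generateFrom.trans (le_antisymm ?_ ?_)
    · exact le_iInf fun n => iInf₂_le (fanU n) ⟨Or.inl rfl, Or.inr ⟨n, rfl⟩⟩
    · refine le_iInf₂ fun s ⟨hs, hgen⟩ => ?_
      rcases hgen with ⟨p, rfl⟩ | ⟨n, rfl⟩
      · exact absurd hs (pt_ne_infty p).symm
      · exact iInf_le _ n
  rw [hnhds]
  exact hasBasis_iInf_principal fanU_antitone.directed_ge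

theorem tendsto_pt_infty {α : Type*} {l : Filter α} {q : α → ℕ × ℕ}
    (hq : Tendsto (fun a => (q a).1) l atTop) : Tendsto (fun a => pt (q a)) l (𝓝 infty) :=
  hasBasis_nhds_infty.tendsto_right_iff.2 fun n _ =>
    (hq.eventually_ge_atTop n).mono fun _ => pt_mem_fanU.2

theorem isDiscrete_range_pt : IsDiscrete (range pt) := by
  refine IsDiscrete.of_nhdsWithin ?_
  rintro _ ⟨p, rfl⟩
  rw [← isOpen_singleton_iff_nhds_eq_pure _ |>.1 (isOpen_singleton_pt p)]
  exact nhdsWithin_le_nhds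

theorem isClosed_range_column (k : ℕ) : IsClosed (range fun m => pt (k, m)) := by
  refine isOpen_compl_iff.1 (isOpen_iff_mem_nhds.2 fun x hx => ?_)
  rcases x with _ | q
  · refine mem_of_superset (hasBasis_nhds_infty.mem_of_mem (i := k + 1) trivial) ?_
    rintro _ hy ⟨m, rfl⟩
    simp [pt_mem_fanU] at hy
  · exact mem_of_superset ((isOpen_singleton_pt q).mem_nhds rfl) (singleton_subset_iff.2 hx)

theorem finite_setOf_pt_mem {K : Set Fan} (hK : IsCompact K) (k : ℕ) :
    {m | pt (k, m) ∈ K}.Finite := by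
  have hfin : (K ∩ range fun m => pt (k, m)).Finite :=
    (hK.inter_right (isClosed_range_column k)).finite
      (isDiscrete_range_pt.mono (inter_subset_right.trans (range_comp_subset_range _ pt)))
  exact (hfin.preimage (pt_injective.comp (Prod.mk_right_injective k)).injOn).subset
    fun m hm => ⟨hm, m, rfl⟩

theorem isClopen_singleton_pt (p : ℕ × ℕ) : IsClopen ({pt p} : Set Fan) :=
  ⟨isClosed_of_subset_discrete_closed (singleton_subset_iff.2 (mem_range_self p.2))
    (isDiscrete_range_pt.mono (range_comp_subset_range _ pt)) (isClosed_range_column p.1),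
    isOpen_singleton_pt p⟩

noncomputable def indicator (p : ℕ × ℕ) : C(Fan, Bool) :=
  ⟨({pt p} : Set Fan).boolIndicator,
    (continuous_boolIndicator_iff_isClopen _).2 (isClopen_singleton_pt p)⟩

theorem indicator_apply_self (p : ℕ × ℕ) : indicator p (pt p) = true :=
  (mem_iff_boolIndicator _ _).1 rfl

theorem indicator_apply_of_ne {p : ℕ × ℕ} {y : Fan} (h : y ≠ pt p) : indicator p y = false :=
  (notMem_iff_boolIndicator _ _).1 h

theorem not_tendsto_indicator {q : ℕ → ℕ × ℕ} (hq : Tendsto (fun j => (q j).1) atTop atTop)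
    (g : C(Fan, Bool)) : ¬ Tendsto (fun j => indicator (q j)) atTop (𝓝 g) := fun hg => by
  have hpt := ContinuousMap.tendsto_apply_of_tendsto hg (tendsto_pt_infty hq)
  have hinf := ((continuous_eval_const infty).tendsto g).comp hg
  simp only [indicator_apply_self] at hpt
  simp only [Function.comp_def, indicator_apply_of_ne (pt_ne_infty _).symm] at hinf
  have h_true : g infty = true := tendsto_nhds_unique hpt tendsto_const_nhds
  have h_false : g infty = false := tendsto_nhds_unique hinf tendsto_const_nhds
  nomatch h_true.symm.trans h_false

theorem tendsto_indicator_cocompact :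
    Tendsto indicator (comap pt (cocompact Fan)) (𝓝 (ContinuousMap.const Fan false)) := by
  refine ContinuousMap.tendsto_nhds_compactOpen.2 fun K hK U _ hU => ?_
  filter_upwards [preimage_mem_comap hK.compl_mem_cocompact] with p hp y hy
  rw [indicator_apply_of_ne (ne_of_mem_of_not_mem hy hp)]
  exact hU hy

noncomputable def testPoint (p : ℕ × ℕ) : ℕ → C(Fan, Bool) := fun i =>
  if i ≤ p.1 then indicator p else if i = p.1 + 1 then indicator (p.2, 0)
  else ContinuousMap.const Fan false

theorem testPoint_apply_of_le {p : ℕ × ℕ} {i : ℕ} (h : i ≤ p.1) : testPoint p i = indicator p :=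
  if_pos h

theorem testPoint_apply_fst_add_one (p : ℕ × ℕ) : testPoint p (p.1 + 1) = indicator (p.2, 0) := by
  simp [testPoint]

theorem isSeqClosed_range_testPoint : IsSeqClosed (range testPoint) := by
  intro u x hu hux
  choose q hq using hu
  obtain rfl : testPoint ∘ q = u := funext hq
  obtain ⟨k, hk⟩ : ∃ k, ∃ᶠ j in atTop, (q j).1 = k := by
    refine (Nat.exists_frequently_eq_or_tendsto_atTop _).resolve_right fun htop => ?_
    refine not_tendsto_indicator htop (x 0) ((tendsto_pi_nhds.1 hux 0).congr fun j => ?_)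
    exact testPoint_apply_of_le (Nat.zero_le _)
  obtain ⟨φ, hφ, hφk⟩ := extraction_of_frequently_atTop hk
  have huxφ := hux.comp hφ.tendsto_atTop
  obtain ⟨n, hn⟩ : ∃ n, ∃ᶠ j in atTop, (q (φ j)).2 = n := by
    refine (Nat.exists_frequently_eq_or_tendsto_atTop _).resolve_right fun htop => ?_
    refine not_tendsto_indicator (q := fun j => ((q (φ j)).2, 0)) htop (x (k + 1))
      ((tendsto_pi_nhds.1 huxφ (k + 1)).congr fun j => ?_)
    simp only [Function.comp_apply, ← hφk j, testPoint_apply_fst_add_one]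
  obtain ⟨ψ, hψ, hψn⟩ := extraction_of_frequently_atTop hn
  have hconst : ((testPoint ∘ q) ∘ φ) ∘ ψ = fun _ => testPoint (k, n) :=
    funext fun j => congrArg testPoint (Prod.ext (hφk (ψ j)) (hψn j))
  have hlim := huxφ.comp hψ.tendsto_atTop
  rw [hconst] at hlim
  exact ⟨(k, n), tendsto_nhds_unique tendsto_const_nhds hlim⟩

theorem const_false_mem_closure_range_testPoint :
    (fun _ => ContinuousMap.const Fan false) ∈ closure (range testPoint) := by
  have hl : (comap pt (cocompact Fan) ⊓ comap Prod.fst atTop).NeBot := by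
    refine ((hasBasis_cocompact.comap pt).inf (atTop_basis.comap Prod.fst)).neBot_iff.2 ?_
    rintro ⟨K, N⟩ ⟨hK, -⟩
    obtain ⟨m, hm⟩ := (finite_setOf_pt_mem hK N).infinite_compl.nonempty
    exact ⟨(N, m), hm, le_refl N⟩
  refine mem_closure_of_tendsto (b := comap pt (cocompact Fan) ⊓ comap Prod.fst atTop)
    (tendsto_pi_nhds.2 fun i => ?_)
    (Eventually.of_forall (mem_range_self (f := testPoint)))
  refine (tendsto_indicator_cocompact.mono_left inf_le_left).congr' ?_
  filter_upwards [mem_inf_of_right (preimage_mem_comap (Ici_mem_atTop i))] with p hp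
  exact (testPoint_apply_of_le hp).symm

theorem const_false_notMem_range_testPoint :
    (fun _ => ContinuousMap.const Fan false) ∉ range testPoint := fun ⟨p, hp⟩ => by
  have h := ContinuousMap.congr_fun (congrFun hp 0) (pt p)
  rw [testPoint_apply_of_le (Nat.zero_le _), indicator_apply_self] at h
  nomatch h

theorem not_sequentialSpace_pi : ¬ SequentialSpace (ℕ → C(Fan, Bool)) := fun _ =>
  const_false_notMem_range_testPoint
    (isSeqClosed_range_testPoint.isClosed.closure_subset const_false_mem_closure_range_testPoint)

end Fan

theorem stmt18 :
    Nonempty (C((Σ _ : ℕ, Fan), Bool) ≃ₜ (ℕ → C(Fan, Bool))) ∧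
    ¬ SequentialSpace C((Σ _ : ℕ, Fan), Bool) := by
  refine ⟨⟨ContinuousMap.sigmaHomeomorph⟩, fun _ => Fan.not_sequentialSpace_pi ?_⟩
  exact ContinuousMap.sigmaHomeomorph.isQuotientMap.sequentialSpace
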